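/- arXiv:2211.00049 — 3 statements merged into one kernel-verified Lean document; each statement's English description precedes it below -/
import Mathlib

section
/- Let B₀ = [[0,1],[-1,0]], B₁ = [[0,1],[1,0]], B₂ = [[1,0],[0,-1]] be 2×2 real matrices. Fix a ∈ ℝ with a² ≠ 1, let ε₀ = (a,1)ᵀ and let ε̄₀ = (1,-a) be the associated row vector. Then for real numbers γ′, u′ and a nonzero column vector ϑ′ ∈ ℝ², the three equations ε̄₀(1 + γ′B₀)ϑ′ = 0, ε̄₀B₂ϑ′ = 0, and ε̄₀(1 + u′B₁)ϑ′ = 0 hold simultaneously if and only if γ′ = 2a/(1-a²), u′ = 2a/(1+a²), and ϑ′ = c·(-a,1)ᵀ for some nonzero c ∈ ℝ. -/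
open Matrix

/-- `B₀ = [[0,1],[-1,0]]`. -/
def B₀ : Matrix (Fin 2) (Fin 2) ℝ := !![0, 1; -1, 0]

/-- `B₁ = [[0,1],[1,0]]`. -/
def B₁ : Matrix (Fin 2) (Fin 2) ℝ := !![0, 1; 1, 0]

/-- `B₂ = [[1,0],[0,-1]]`. -/
def B₂ : Matrix (Fin 2) (Fin 2) ℝ := !![1, 0; 0, -1]

/-- For the column vector `ε₀ = (a,1)ᵀ` the associated row vector is `ε̄₀ = (1,-a)`. -/
def εbar (a : ℝ) : Fin 2 → ℝ := ![1, -a]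

/-- The NS5-type boundary constraints `ε̄₀(1+γ′B₀)ϑ′ = 0`, `ε̄₀B₂ϑ′ = 0`, `ε̄₀(1+u′B₁)ϑ′ = 0`
hold for a nonzero `ϑ′` iff `γ′ = 2a/(1-a²)`, `u′ = 2a/(1+a²)` and `ϑ′ = c·(-a,1)ᵀ`
for some nonzero `c`. -/
theorem stmt_1 (a : ℝ) (ha : a ^ 2 ≠ 1) (γ' u' : ℝ) (ϑ' : Fin 2 → ℝ) (hϑ : ϑ' ≠ 0) :
    (εbar a ⬝ᵥ ((1 + γ' • B₀).mulVec ϑ') = 0 ∧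
     εbar a ⬝ᵥ (B₂.mulVec ϑ') = 0 ∧
     εbar a ⬝ᵥ ((1 + u' • B₁).mulVec ϑ') = 0) ↔
    (γ' = 2 * a / (1 - a ^ 2) ∧ u' = 2 * a / (1 + a ^ 2) ∧
     ∃ c : ℝ, c ≠ 0 ∧ ϑ' = c • ![-a, 1]) := by
  have h1 : 1 - a ^ 2 ≠ 0 := by intro h; apply ha; linarith
  have h2 : 1 + a ^ 2 ≠ 0 := by positivity
  simp only [εbar, B₀, B₁, B₂, mulVec, dotProduct, Fin.sum_univ_two,
    Matrix.add_apply, Matrix.smul_apply, Matrix.one_apply, smul_eq_mul]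
  norm_num [Matrix.cons_val_zero, Matrix.cons_val_one, Matrix.head_cons]
  constructor
  · rintro ⟨e1, e2, e3⟩
    have hxy : ϑ' 0 = -a * ϑ' 1 := by linarith
    have hy0 : ϑ' 1 ≠ 0 := by
      intro h
      apply hϑ
      funext i; fin_cases i
      · simpa [h] using hxy
      · exact h
    refine ⟨?_, ?_, ϑ' 1, hy0, ?_⟩
    · have key : ϑ' 1 * (γ' * (1 - a ^ 2) - 2 * a) = 0 := by
        linear_combination e1 - (1 + a * γ') * hxy
      rcases mul_eq_zero.mp key with h | h
      · exact absurd h hy0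
      · field_simp
        linarith
    · have key : ϑ' 1 * (u' * (1 + a ^ 2) - 2 * a) = 0 := by
        linear_combination e3 - (1 - a * u') * hxy
      rcases mul_eq_zero.mp key with h | h
      · exact absurd h hy0
      · field_simp
        linarith
    · funext i; fin_cases i <;> simp [hxy] <;> ring
  · rintro ⟨hγ, hu, c, hc, hϑ'⟩
    have hx' : ϑ' 0 = -a * c := by rw [hϑ']; simp; ring
    have hy' : ϑ' 1 = c := by rw [hϑ']; simp
    subst hγ hu
    refine ⟨?_, ?_, ?_⟩ <;> rw [hx', hy'] <;> field_simp <;> ring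
end

section
/- Let A be an associative unital ℂ-algebra, ℏ ∈ ℂ, n a positive integer, and let Xⁱ_j ∈ A (1 ≤ i,j ≤ n) be any elements. Let M be a left A-module (a ℂ-vector space with compatible A-action) and v ∈ M a vector such that Xⁱ_j·v = 0 whenever i < j and X^k_k·v = μ_k·v for scalars μ_k ∈ ℂ (1 ≤ k ≤ n). Then for every u ∈ ℂ the Capelli determinant C(X,u) := Σ_{σ ∈ S_n} sgn(σ) ∏_{k=1}^{n} ((u − (n−k)ℏ)·δ^{σ(k)}_k·1_A − X^{σ(k)}_k), with the product taken in increasing order of k from left to right, satisfies C(X,u)·v = ∏_{k=1}^{n} (u − (n−k)ℏ − μ_k)·v. -/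
/-! Expanding the determinant, every permutation `σ ≠ 1` contributes nothing on `v`: if `k` is the
largest index moved by `σ`, then `σ k < k`, the factors to the right of the `k`-th one are
diagonal and act on `v` by scalars, and the `k`-th factor is `-X^{σ k}_k`, a raising operator,
which kills `v`. The identity permutation contributes the product of the diagonal factors, each
acting by `u − (n−k)ℏ − μ_k`. -/

/-- The index `k : Fin n` corresponds to the math index `k+1 ∈ {1,…,n}`, so the scalar
factor is `u − (n−1−k)ℏ`. -/
noncomputable def capelli {A : Type*} [Ring A] [Algebra ℂ A] {n : ℕ}
    (X : Fin n → Fin n → A) (u ℏ : ℂ) : A :=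
  ∑ σ : Equiv.Perm (Fin n),
    (Equiv.Perm.sign σ : ℤ) •
      (List.ofFn (fun k : Fin n =>
        (if σ k = k then algebraMap ℂ A (u - ((n : ℂ) - 1 - (k : ℕ)) * ℏ) else 0)
          - X (σ k) k)).prod

theorem Equiv.Perm.exists_apply_lt_and_forall_gt_apply_eq {α : Type*} [Fintype α] [LinearOrder α]
    {σ : Equiv.Perm α} (hσ : σ ≠ 1) :
    ∃ k, σ k < k ∧ ∀ j, k < j → σ j = j := by
  have hne : σ.support.Nonempty :=
    Finset.nonempty_iff_ne_empty.2 (mt Equiv.Perm.support_eq_empty_iff.1 hσ)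
  set k := σ.support.max' hne
  have hfixed : ∀ j, k < j → σ j = j := fun j hkj => by
    by_contra hj
    exact (σ.support.le_max' j (Equiv.Perm.mem_support.2 hj)).not_gt hkj
  have hk : σ k ≠ k := Equiv.Perm.mem_support.1 (σ.support.max'_mem hne)
  refine ⟨k, (lt_or_gt_of_ne hk).resolve_right fun hgt => hk ?_, hfixed⟩
  exact σ.injective (hfixed _ hgt)

section ListProd

variable {R A M : Type*} [CommMonoid R] [Monoid A]

theorem List.prod_ofFn_smul_of_forall_smul_eq [MulAction A M] [MulAction R M] [SMulCommClass A R M]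
    {v : M} : ∀ {n : ℕ} (g : Fin n → A) (c : Fin n → R), (∀ k, g k • v = c k • v) →
    (List.ofFn g).prod • v = (∏ k, c k) • v
  | 0, _, _, _ => by simp
  | n + 1, g, c, h => by
    rw [List.ofFn_succ, List.prod_cons, mul_smul,
      prod_ofFn_smul_of_forall_smul_eq (fun k => g k.succ) (fun k => c k.succ) (fun k => h k.succ),
      smul_comm, h 0, smul_smul, Fin.prod_univ_succ, mul_comm]

theorem List.prod_ofFn_smul_eq_zero [AddMonoid M] [DistribMulAction A M] [DistribMulAction R M]
    [SMulCommClass A R M] {v : M} : ∀ {n : ℕ} (g : Fin n → A) (k : Fin n), g k • v = 0 →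
    (∀ j, k < j → ∃ c : R, g j • v = c • v) → (List.ofFn g).prod • v = 0
  | 0, _, k, _, _ => k.elim0
  | n + 1, g, k, hk, htail => by
    rw [List.ofFn_succ, List.prod_cons, mul_smul]
    rcases Fin.eq_zero_or_eq_succ k with rfl | ⟨k, rfl⟩
    · choose c hc using fun j : Fin n => htail j.succ j.succ_pos
      rw [prod_ofFn_smul_of_forall_smul_eq _ c hc, smul_comm, hk, smul_zero]
    · rw [prod_ofFn_smul_eq_zero (fun j => g j.succ) k hk
        (fun j hj => htail j.succ (Fin.succ_lt_succ_iff.2 hj)), smul_zero]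

end ListProd

section Capelli

variable {A : Type*} [Ring A] [Algebra ℂ A] {n : ℕ}
  {M : Type*} [AddCommGroup M] [Module A M]

noncomputable def capelliFactor (X : Fin n → Fin n → A) (u ℏ : ℂ) (σ : Equiv.Perm (Fin n))
    (k : Fin n) : A :=
  (if σ k = k then algebraMap ℂ A (u - ((n : ℂ) - 1 - (k : ℕ)) * ℏ) else 0) - X (σ k) k

theorem capelli_eq_sum_capelliFactor (X : Fin n → Fin n → A) (u ℏ : ℂ) :
    capelli X u ℏ =
      ∑ σ : Equiv.Perm (Fin n), (σ.sign : ℤ) • (List.ofFn (capelliFactor X u ℏ σ)).prod :=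
  rfl

variable {X : Fin n → Fin n → A} {v : M} {μ : Fin n → ℂ}

theorem capelliFactor_smul_of_apply_eq [Module ℂ M] [IsScalarTower ℂ A M]
    (hdiag : ∀ k : Fin n, X k k • v = μ k • v) (u ℏ : ℂ)
    {σ : Equiv.Perm (Fin n)} {k : Fin n} (hk : σ k = k) :
    capelliFactor X u ℏ σ k • v = (u - ((n : ℂ) - 1 - (k : ℕ)) * ℏ - μ k) • v := by
  rw [capelliFactor, if_pos hk, sub_smul, algebraMap_smul, hk, hdiag, ← sub_smul]

theorem capelliFactor_smul_of_apply_lt (hup : ∀ i j : Fin n, i < j → X i j • v = 0) (u ℏ : ℂ)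
    {σ : Equiv.Perm (Fin n)} {k : Fin n} (hk : σ k < k) : capelliFactor X u ℏ σ k • v = 0 := by
  rw [capelliFactor, if_neg hk.ne, zero_sub, neg_smul, hup _ _ hk, neg_zero]

theorem prod_capelliFactor_smul_of_ne_one [Module ℂ M] [IsScalarTower ℂ A M]
    (hup : ∀ i j : Fin n, i < j → X i j • v = 0)
    (hdiag : ∀ k : Fin n, X k k • v = μ k • v) (u ℏ : ℂ) {σ : Equiv.Perm (Fin n)} (hσ : σ ≠ 1) :
    (List.ofFn (capelliFactor X u ℏ σ)).prod • v = 0 := by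
  obtain ⟨k, hlt, hfixed⟩ := Equiv.Perm.exists_apply_lt_and_forall_gt_apply_eq hσ
  exact List.prod_ofFn_smul_eq_zero (R := ℂ) _ k (capelliFactor_smul_of_apply_lt hup u ℏ hlt)
    fun j hj => ⟨_, capelliFactor_smul_of_apply_eq hdiag u ℏ (hfixed j hj)⟩

end Capelli

theorem stmt_6_general {A : Type*} [Ring A] [Algebra ℂ A] {n : ℕ}
    (ℏ : ℂ) (X : Fin n → Fin n → A)
    {M : Type*} [AddCommGroup M] [Module ℂ M] [Module A M] [IsScalarTower ℂ A M]
    (v : M) (μ : Fin n → ℂ)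
    (hup : ∀ i j : Fin n, i < j → X i j • v = 0)
    (hdiag : ∀ k : Fin n, X k k • v = μ k • v) :
    ∀ u : ℂ, capelli X u ℏ • v =
      (∏ k : Fin n, (u - ((n : ℂ) - 1 - (k : ℕ)) * ℏ - μ k)) • v := by
  intro u
  rw [capelli_eq_sum_capelliFactor, Finset.sum_smul,
    Finset.sum_eq_single_of_mem 1 (Finset.mem_univ _)]
  · rw [Equiv.Perm.sign_one, Units.val_one, one_smul]
    exact List.prod_ofFn_smul_of_forall_smul_eq _ _
      fun k => capelliFactor_smul_of_apply_eq hdiag u ℏ rfl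
  · intro σ _ hσ
    rw [smul_assoc, prod_capelliFactor_smul_of_ne_one hup hdiag u ℏ hσ, smul_zero]

/-- If `v` is a highest weight vector for the `Xⁱ_j` (killed by the `Xⁱ_j` with `i < j`,
eigenvector of the `X^k_k` with eigenvalues `μ_k`), then the Capelli determinant acts on `v`
by `C(X,u)·v = ∏_{k=1}^{n} (u − (n−k)ℏ − μ_k)·v`. -/
theorem stmt_6 {A : Type*} [Ring A] [Algebra ℂ A] {n : ℕ} (hn : 0 < n)
    (ℏ : ℂ) (X : Fin n → Fin n → A)
    {M : Type*} [AddCommGroup M] [Module ℂ M] [Module A M] [IsScalarTower ℂ A M]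
    (v : M) (μ : Fin n → ℂ)
    (hup : ∀ i j : Fin n, i < j → X i j • v = 0)
    (hdiag : ∀ k : Fin n, X k k • v = μ k • v) :
    ∀ u : ℂ, capelli X u ℏ • v =
      (∏ k : Fin n, (u - ((n : ℂ) - 1 - (k : ℕ)) * ℏ - μ k)) • v :=
  stmt_6_general ℏ X v μ hup hdiag
end

section
/- Let A be an associative unital ℂ-algebra, ℏ ∈ ℂ, n a positive integer, Xⁱ_j ∈ A (1 ≤ i,j ≤ n), M a left A-module, and v ∈ M a nonzero vector with Xⁱ_j·v = 0 whenever i < j and X^k_k·v = μ_k·v for scalars μ_k ∈ ℂ. Suppose that for every u ∈ ℂ the Capelli determinant satisfies C(X,u)·v = ∏_{k=1}^{n} (u − ℏ(λ_k + (n−1)/2))·v for given scalars λ_1, …, λ_n ∈ ℂ. Then there exists a permutation σ of {1,…,n} such that μ_k = ℏ(λ_{σ(k)} − (n − 2k + 1)/2) for every k; that is, up to a permutation of the entries of λ, the weight (μ_1,…,μ_n) equals ℏ(λ − ρ), where ρ = ((n−1)/2, (n−3)/2, …, −(n−1)/2) is the Weyl vector of gl_n. -/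
/-- Extract a permutation from an equality of multisets of values. -/
private lemma exists_comp_perm : ∀ {n : ℕ} (a b : Fin n → ℂ),
    Multiset.map a Finset.univ.val = Multiset.map b Finset.univ.val →
    ∃ σ : Equiv.Perm (Fin n), ∀ k, a k = b (σ k) := by
  intro n
  induction n with
  | zero => exact fun a b _ => ⟨1, fun k => k.elim0⟩
  | succ n ih =>
    intro a b h
    have h0 : a 0 ∈ Multiset.map b Finset.univ.val := by
      rw [← h]
      exact Multiset.mem_map_of_mem _ (Finset.mem_univ_val _)
    obtain ⟨j, -, hj⟩ := Multiset.mem_map.1 h0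
    set b' : Fin (n + 1) → ℂ := fun k => b (Equiv.swap 0 j k) with hb'
    have hmapb' : Multiset.map b' Finset.univ.val = Multiset.map b Finset.univ.val := by
      have h1 : (Finset.univ.map (Equiv.swap 0 j).toEmbedding).val = Finset.univ.val :=
        congrArg Finset.val (Finset.map_univ_equiv (Equiv.swap 0 j))
      rw [Finset.map_val] at h1
      calc Multiset.map b' Finset.univ.val
        = Multiset.map b (Multiset.map (Equiv.swap 0 j) Finset.univ.val) := by
            rw [Multiset.map_map]; rfl
        _ = Multiset.map b Finset.univ.val := by
            rw [show Multiset.map (⇑(Equiv.swap 0 j)) Finset.univ.val = Multiset.map (⇑(Equiv.toEmbedding (Equiv.swap 0 j))) Finset.univ.val from rfl, h1]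
    have hsplit : ∀ f : Fin (n + 1) → ℂ,
        Multiset.map f Finset.univ.val = f 0 ::ₘ Multiset.map (f ∘ Fin.succ) Finset.univ.val := by
      intro f
      have := congrArg Finset.val (Fin.univ_succ n)
      rw [this, Finset.cons_val, Multiset.map_cons, Finset.map_val, Multiset.map_map]
      rfl
    have hcancel : Multiset.map (a ∘ Fin.succ) Finset.univ.val
        = Multiset.map (b' ∘ Fin.succ) Finset.univ.val := by
      have h2 : a 0 ::ₘ Multiset.map (a ∘ Fin.succ) Finset.univ.val
          = b' 0 ::ₘ Multiset.map (b' ∘ Fin.succ) Finset.univ.val := by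
        rw [← hsplit a, ← hsplit b', h, hmapb']
      have hb0 : b' 0 = a 0 := by simp [hb', hj]
      rw [hb0] at h2
      exact (Multiset.cons_inj_right _).1 h2
    obtain ⟨σ', hσ'⟩ := ih (a ∘ Fin.succ) (b' ∘ Fin.succ) hcancel
    refine ⟨(Equiv.Perm.decomposeFin.symm (0, σ')).trans (Equiv.swap 0 j), fun k => ?_⟩
    refine Fin.cases ?_ (fun x => ?_) k
    · simp [hj.symm, Equiv.Perm.decomposeFin_symm_apply_zero]
    · have := hσ' x
      simpa [hb', Equiv.Perm.decomposeFin_symm_apply_succ, Equiv.swap_self] using this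

private lemma smul_comm_scalar {A : Type*} [Ring A] [Algebra ℂ A]
    {M : Type*} [AddCommGroup M] [Module ℂ M] [Module A M] [IsScalarTower ℂ A M]
    (a : A) (s : ℂ) (w : M) : a • (s • w) = s • (a • w) := by
  rw [← algebraMap_smul A s w, ← mul_smul, ← Algebra.commutes s a, mul_smul, algebraMap_smul]

private lemma capelli_smul_hw {A : Type*} [Ring A] [Algebra ℂ A] {n : ℕ}
    (ℏ : ℂ) (X : Fin n → Fin n → A)
    {M : Type*} [AddCommGroup M] [Module ℂ M] [Module A M] [IsScalarTower ℂ A M]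
    (v : M) (μ : Fin n → ℂ)
    (hup : ∀ i j : Fin n, i < j → X i j • v = 0)
    (hdiag : ∀ k : Fin n, X k k • v = μ k • v) (u : ℂ) :
    capelli X u ℏ • v
      = (∏ k : Fin n, (u - ((n : ℂ) - 1 - (k : ℕ)) * ℏ - μ k)) • v := by
  set c : Fin n → ℂ := fun k => u - ((n : ℂ) - 1 - (k : ℕ)) * ℏ with hc
  have key : ∀ (σ : Equiv.Perm (Fin n)) (d m : ℕ), m + d = n →
      ((((List.finRange n).drop m).map (fun k : Fin n =>
        (if σ k = k then algebraMap ℂ A (c k) else 0) - X (σ k) k)).prod) • v =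
      if ∀ k : Fin n, m ≤ (k : ℕ) → σ k = k then
        (∏ k ∈ Finset.univ.filter fun k : Fin n => m ≤ (k : ℕ), (c k - μ k)) • v
      else 0 := by
    intro σ d
    induction d with
    | zero =>
      intro m hm
      have hmn : m = n := by omega
      rw [List.drop_eq_nil_of_le (by simp [hmn]), List.map_nil, List.prod_nil,
        if_pos (fun k hk => absurd k.isLt (by omega))]
      have hF : (Finset.univ.filter fun k : Fin n => m ≤ (k : ℕ)) = ∅ := by
        ext k
        simp only [Finset.mem_filter, Finset.mem_univ, true_and, Finset.notMem_empty, iff_false]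
        have := k.isLt
        omega
      rw [hF, Finset.prod_empty, one_smul, one_smul]
    | succ d ihd =>
      intro m hm
      have hmn : m < n := by omega
      have hdrop : (List.finRange n).drop m
          = (⟨m, hmn⟩ : Fin n) :: (List.finRange n).drop (m + 1) := by
        rw [List.drop_eq_getElem_cons (by simpa using hmn)]
        simp
      rw [hdrop, List.map_cons, List.prod_cons, mul_smul, ihd (m + 1) (by omega)]
      by_cases hrest : ∀ k : Fin n, m + 1 ≤ (k : ℕ) → σ k = k
      · rw [if_pos hrest]
        by_cases hfix : σ ⟨m, hmn⟩ = ⟨m, hmn⟩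
        · rw [if_pos hfix, hfix]
          have hsplit : (Finset.univ.filter fun k : Fin n => m ≤ (k : ℕ))
              = insert (⟨m, hmn⟩ : Fin n)
                (Finset.univ.filter fun k : Fin n => m + 1 ≤ (k : ℕ)) := by
            ext k
            simp only [Finset.mem_filter, Finset.mem_univ, true_and, Finset.mem_insert]
            constructor
            · intro hk
              rcases Nat.lt_or_ge m (k : ℕ) with h' | h'
              · exact Or.inr h'
              · exact Or.inl (Fin.ext (by simp only [Fin.val_mk]; omega))
            · rintro (rfl | hk)
              · exact le_refl m
              · omega
          have hnotmem : (⟨m, hmn⟩ : Fin n) ∉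
              (Finset.univ.filter fun k : Fin n => m + 1 ≤ (k : ℕ)) := by
            simp
          have hall : ∀ k : Fin n, m ≤ (k : ℕ) → σ k = k := by
            intro k hk
            rcases Nat.lt_or_ge m (k : ℕ) with h' | h'
            · exact hrest k h'
            · have hkm : k = ⟨m, hmn⟩ := Fin.ext (by simp only [Fin.val_mk]; omega)
              rw [hkm]; exact hfix
          rw [if_pos hall, hsplit, Finset.prod_insert hnotmem]
          set S := ∏ k ∈ Finset.univ.filter fun k : Fin n => m + 1 ≤ (k : ℕ), (c k - μ k)
          rw [sub_smul, smul_comm_scalar, smul_comm_scalar, algebraMap_smul,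
            hdiag ⟨m, hmn⟩, ← smul_sub, ← sub_smul, smul_smul, mul_comm]
        · rw [if_neg hfix, zero_sub, neg_smul, smul_comm_scalar, if_neg (by
            intro hall; exact hfix (hall ⟨m, hmn⟩ (le_refl m)))]
          have hlt : σ ⟨m, hmn⟩ < (⟨m, hmn⟩ : Fin n) := by
            rcases Nat.lt_or_ge ((σ ⟨m, hmn⟩ : Fin n) : ℕ) m with h' | h'
            · exact h'
            · exfalso
              rcases Nat.eq_or_lt_of_le h' with h'' | h''
              · exact hfix (Fin.ext h''.symm)
              · have := hrest (σ ⟨m, hmn⟩) h''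
                exact hfix (σ.injective this)
          rw [hup _ _ hlt, smul_zero, neg_zero]
      · rw [if_neg hrest, smul_zero, if_neg (by
          intro hall; exact hrest fun k hk => hall k (by omega))]
  rw [capelli, Finset.sum_smul]
  rw [Finset.sum_eq_single (1 : Equiv.Perm (Fin n))]
  · have h1 := key 1 n 0 (by omega)
    rw [List.drop_zero] at h1
    rw [smul_assoc]
    simp only [Equiv.Perm.sign_one, Units.val_one, one_smul]
    rw [List.ofFn_eq_map, show (fun k : Fin n =>
        (if (1 : Equiv.Perm (Fin n)) k = k then algebraMap ℂ A (u - ((n : ℂ) - 1 - (k : ℕ)) * ℏ)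
          else 0) - X ((1 : Equiv.Perm (Fin n)) k) k)
      = (fun k : Fin n => (if (1 : Equiv.Perm (Fin n)) k = k then algebraMap ℂ A (c k) else 0)
          - X ((1 : Equiv.Perm (Fin n)) k) k) from rfl, h1,
      if_pos (show ∀ k : Fin n, 0 ≤ (k : ℕ) → (1 : Equiv.Perm (Fin n)) k = k from
        fun k _ => rfl)]
    congr 1
    rw [Finset.filter_true_of_mem (fun k _ => Nat.zero_le _)]
  · intro σ _ hσ
    have hne : ¬∀ k : Fin n, 0 ≤ (k : ℕ) → σ k = k := by
      intro hall
      exact hσ (Equiv.ext fun k => hall k (Nat.zero_le _))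
    have h1 := key σ n 0 (by omega)
    rw [List.drop_zero, if_neg hne] at h1
    rw [smul_assoc, List.ofFn_eq_map, show (fun k : Fin n =>
        (if σ k = k then algebraMap ℂ A (u - ((n : ℂ) - 1 - (k : ℕ)) * ℏ) else 0) - X (σ k) k)
      = (fun k : Fin n => (if σ k = k then algebraMap ℂ A (c k) else 0) - X (σ k) k) from rfl,
      h1, smul_zero]
  · intro h
    exact absurd (Finset.mem_univ _) h


/-- If `v ≠ 0` is a highest weight vector of weight `(μ_1,…,μ_n)` and the Capelli
determinant acts on `v` by `C(X,u)·v = ∏_{k=1}^{n}(u − ℏ(λ_k + (n−1)/2))·v` for all `u`,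
then up to a permutation of the entries of `λ` one has `μ_k = ℏ(λ_k − (n−2k+1)/2)`,
i.e. the weight is `ℏ(λ − ρ)` with `ρ` the Weyl vector of `gl_n`.
(The Lean index `k : Fin n` corresponds to the math index `k+1`, so the component of the
Weyl vector is `(n − 2(k+1) + 1)/2`.) -/
theorem stmt_7 {A : Type*} [Ring A] [Algebra ℂ A] {n : ℕ} (hn : 0 < n)
    (ℏ : ℂ) (X : Fin n → Fin n → A)
    {M : Type*} [AddCommGroup M] [Module ℂ M] [Module A M] [IsScalarTower ℂ A M]
    (v : M) (hv : v ≠ 0) (μ : Fin n → ℂ) (lam : Fin n → ℂ)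
    (hup : ∀ i j : Fin n, i < j → X i j • v = 0)
    (hdiag : ∀ k : Fin n, X k k • v = μ k • v)
    (hcap : ∀ u : ℂ, capelli X u ℏ • v =
      (∏ k : Fin n, (u - ℏ * (lam k + ((n : ℂ) - 1) / 2))) • v) :
    ∃ σ : Equiv.Perm (Fin n), ∀ k : Fin n,
      μ k = ℏ * (lam (σ k) - ((n : ℂ) - 2 * ((k : ℕ) + 1) + 1) / 2) := by
  
  set a : Fin n → ℂ := fun k => ((n : ℂ) - 1 - (k : ℕ)) * ℏ + μ k with ha
  set b : Fin n → ℂ := fun k => ℏ * (lam k + ((n : ℂ) - 1) / 2) with hb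
  have hval : ∀ u : ℂ, (∏ k : Fin n, (u - a k)) = ∏ k : Fin n, (u - b k) := by
    intro u
    have h1 := capelli_smul_hw ℏ X v μ hup hdiag u
    have h2 := hcap u
    rw [h1] at h2
    have h3 : ((∏ k : Fin n, (u - ((n : ℂ) - 1 - (k : ℕ)) * ℏ - μ k))
        - ∏ k : Fin n, (u - ℏ * (lam k + ((n : ℂ) - 1) / 2))) • v = 0 := by
      rw [sub_smul, h2, sub_self]
    rcases smul_eq_zero.1 h3 with h4 | h4
    · have h5 := sub_eq_zero.1 h4
      calc (∏ k : Fin n, (u - a k))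
          = ∏ k : Fin n, (u - ((n : ℂ) - 1 - (k : ℕ)) * ℏ - μ k) :=
            Finset.prod_congr rfl fun k _ => by rw [ha]; ring
        _ = ∏ k : Fin n, (u - b k) := h5
    · exact absurd h4 hv
  have hpoly : (∏ k : Fin n, (Polynomial.X - Polynomial.C (a k)))
      = ∏ k : Fin n, (Polynomial.X - Polynomial.C (b k)) := by
    apply Polynomial.funext
    intro u
    simpa [Polynomial.eval_prod] using hval u
  have hroots : Multiset.map a Finset.univ.val = Multiset.map b Finset.univ.val := by
    have h6 := congrArg Polynomial.roots hpoly
    rwa [Finset.prod_eq_multiset_prod, Finset.prod_eq_multiset_prod,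
      show Multiset.map (fun k : Fin n => Polynomial.X - Polynomial.C (a k)) Finset.univ.val
        = Multiset.map (fun r => Polynomial.X - Polynomial.C r)
            (Multiset.map a Finset.univ.val) by rw [Multiset.map_map]; rfl,
      show Multiset.map (fun k : Fin n => Polynomial.X - Polynomial.C (b k)) Finset.univ.val
        = Multiset.map (fun r => Polynomial.X - Polynomial.C r)
            (Multiset.map b Finset.univ.val) by rw [Multiset.map_map]; rfl,
      Polynomial.roots_multiset_prod_X_sub_C, Polynomial.roots_multiset_prod_X_sub_C] at h6
  obtain ⟨σ, hσ⟩ := exists_comp_perm a b hroots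
  refine ⟨σ, fun k => ?_⟩
  have h7 := hσ k
  rw [ha, hb] at h7
  linear_combination h7
end
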